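/- arXiv:0708.2997 — 2 statements merged into one kernel-verified Lean document; each statement's English description precedes it below -/
import Mathlib

section
/- Let ν_n = f_n·μ_n be an admissible sequence of probability measures on Δ^{n-1}: f_n ≥ 0, ∫ f_n dμ_n = 1, and for each p ≥ 1 there exist A > 0 and 0 < b < 2 with f_n(ℓ) ≤ A·b^n for all ℓ ∈ Λ_p. Fix p ≥ 0. Then there exist C > 0 and 0 < a < 1 such that for all n, ν_n(Δ^{n-1} - Γ_{p+2}) ≤ C·a^n. -/
/-!
If `ℓ ∈ Δ \ Γ_k`, some `k` coordinates carry mass `≥ 1/2`, so in the chart `emb` the remaining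
`≥ m - k` coordinates lie in a slab `{x ∈ (0,1)^m | ∑_{i ∈ K} x i ≤ 1/2}`, of volume at most
`2^{-#K} / #K!`. Summing over the `(m+1).choose k` choices of the heavy set and multiplying by the
normalising factor `m!` gives `μ(Δ \ Γ_k) ≤ (m+1)^{2k} 2^{k+1} 2^{-(m+1)}`. Since `Δ \ Γ_k ⊆ Λ_k`,
the density is at most `A b^{m+1}` there, so `ν(Δ \ Γ_k)` is a polynomial times `(b/2)^{m+1}`,
which is `O(a^{m+1})` for any `b/2 < a < 1`; the finitely many small `m` are covered by `ν ≤ 1`.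
-/

open MeasureTheory Finset Filter

/-- The open standard simplex Δ^m ⊂ ℝ^{m+1}. -/
def Simplex (m : ℕ) : Set (Fin (m+1) → ℝ) :=
  {ℓ | (∀ i, 0 < ℓ i) ∧ ∑ i, ℓ i = 1}

/-- Parametrization of the hyperplane ∑ ℓ i = 1 by ℝ^m. -/
noncomputable def emb (m : ℕ) (x : Fin m → ℝ) : Fin (m+1) → ℝ :=
  Fin.snoc x (1 - ∑ i, x i)

/-- Normalized Lebesgue measure of a subset of the simplex Δ^m,
computed as a ratio of Lebesgue volumes in the parametrizing chart. -/
noncomputable def simplexMeasure (m : ℕ) (A : Set (Fin (m+1) → ℝ)) : ENNReal :=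
  volume (emb m ⁻¹' A) / volume (emb m ⁻¹' (Simplex m))

/-- The set Γ_p of length vectors for which every p-element subset is short. -/
def Gamma (m p : ℕ) : Set (Fin (m+1) → ℝ) :=
  {ℓ ∈ Simplex m | ∀ J : Finset (Fin (m+1)), J.card = p → ∑ i ∈ J, ℓ i < 1/2}

/-- The set Λ_p where some coordinate is ≥ 1/(2p). -/
def Lambda (m p : ℕ) : Set (Fin (m+1) → ℝ) :=
  {ℓ ∈ Simplex m | ∃ i, 1/(2*(p:ℝ)) ≤ ℓ i}

/-- The normalized Lebesgue measure μ_n on the simplex Δ^m ⊂ ℝ^{m+1},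
as an actual measure on ℝ^{m+1} (supported on the simplex). -/
noncomputable def simplexProb (m : ℕ) : Measure (Fin (m+1) → ℝ) :=
  (m.factorial : ENNReal) • Measure.map (emb m) (volume.restrict (emb m ⁻¹' Simplex m))

open scoped Nat

theorem lintegral_Ioc_ofReal_sub_pow_div_factorial (d : ℕ) {c : ℝ} (hc : 0 ≤ c) :
    ∫⁻ t in Set.Ioc 0 c, ENNReal.ofReal ((c - t) ^ d / d !) =
      ENNReal.ofReal (c ^ (d + 1) / (d + 1)!) := by
  rw [← ofReal_integral_eq_lintegral_ofReal]
  · rw [← intervalIntegral.integral_of_le hc, intervalIntegral.integral_div,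
      intervalIntegral.integral_comp_sub_left (fun u => u ^ d) c, sub_self, sub_zero,
      integral_pow, Nat.factorial_succ]
    push_cast
    field_simp
    simp
  · exact (by fun_prop : Continuous fun t : ℝ => (c - t) ^ d / d !).integrableOn_Ioc
  · filter_upwards [ae_restrict_mem measurableSet_Ioc] with t ht
    have : 0 ≤ c - t := by linarith [ht.2]
    positivity

theorem volume_corner_le_fin (d : ℕ) {c : ℝ} (hc : 0 ≤ c) :
    volume {y : Fin d → ℝ | (∀ i, 0 < y i) ∧ ∑ i, y i ≤ c} ≤ ENNReal.ofReal (c ^ d / d !) := by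
  induction d generalizing c with
  | zero => simp [hc, volume_pi]
  | succ d ih =>
    set A : Set (ℝ × (Fin d → ℝ)) := {q | 0 < q.1 ∧ (∀ i, 0 < q.2 i) ∧ q.1 + ∑ i, q.2 i ≤ c}
    have hA : MeasurableSet A := by measurability
    have hcorner : {y : Fin (d + 1) → ℝ | (∀ i, 0 < y i) ∧ ∑ i, y i ≤ c} =
        MeasurableEquiv.piFinSuccAbove (fun _ => ℝ) 0 ⁻¹' A := by
      ext y
      simp [A, MeasurableEquiv.piFinSuccAbove, Fin.insertNthEquiv, Fin.sum_univ_succ,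
        Fin.forall_fin_succ, Fin.tail, and_assoc]
    have hfiber : ∀ t, volume (Prod.mk t ⁻¹' A) ≤
        (Set.Ioc 0 c).indicator (fun t => ENNReal.ofReal ((c - t) ^ d / d !)) t := by
      intro t
      by_cases ht : t ∈ Set.Ioc 0 c
      · rw [Set.indicator_of_mem ht]
        refine (measure_mono ?_).trans (ih (c := c - t) (by linarith [ht.2]))
        exact fun y hy => ⟨hy.2.1, by linarith [hy.2.2]⟩
      · have : Prod.mk t ⁻¹' A = ∅ := by
          refine Set.eq_empty_of_forall_notMem ?_
          rintro y ⟨ht0, hy, hsum⟩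
          refine ht ⟨ht0, ?_⟩
          linarith [Finset.sum_nonneg fun i (_ : i ∈ univ) => (hy i).le]
        simp [this]
    rw [hcorner, (volume_preserving_piFinSuccAbove (fun _ => ℝ) 0).measure_preimage
      hA.nullMeasurableSet, Measure.volume_eq_prod, Measure.prod_apply hA,
      ← lintegral_Ioc_ofReal_sub_pow_div_factorial d hc, ← lintegral_indicator measurableSet_Ioc]
    exact lintegral_mono hfiber

theorem volume_corner_le (ι : Type*) [Fintype ι] {c : ℝ} (hc : 0 ≤ c) :
    volume {y : ι → ℝ | (∀ i, 0 < y i) ∧ ∑ i, y i ≤ c} ≤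
      ENNReal.ofReal (c ^ Fintype.card ι / (Fintype.card ι)!) := by
  let e := MeasurableEquiv.piCongrLeft (fun _ => ℝ) (Fintype.equivFin ι).symm
  have hpre : e ⁻¹' {y : ι → ℝ | (∀ i, 0 < y i) ∧ ∑ i, y i ≤ c} =
      {y | (∀ i, 0 < y i) ∧ ∑ i, y i ≤ c} := by
    ext y
    simp [e, MeasurableEquiv.coe_piCongrLeft, Equiv.piCongrLeft_apply_apply,
      ← (Fintype.equivFin ι).symm.sum_comp, ← (Fintype.equivFin ι).symm.forall_congr_right]
  rw [← (volume_measurePreserving_piCongrLeft (fun _ => ℝ)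
    (Fintype.equivFin ι).symm).measure_preimage (by measurability), hpre]
  exact volume_corner_le_fin _ hc

theorem volume_slab_le {ι : Type*} [Fintype ι] [DecidableEq ι] (K : Finset ι) {c : ℝ} (hc : 0 ≤ c) :
    volume {x : ι → ℝ | (∀ i, x i ∈ Set.Ioo 0 1) ∧ ∑ i ∈ K, x i ≤ c} ≤
      ENNReal.ofReal (c ^ #K / (#K)!) := by
  let e := MeasurableEquiv.piEquivPiSubtypeProd (fun _ : ι => ℝ) (· ∈ K)
  let A : Set (K → ℝ) := {y | (∀ i, 0 < y i) ∧ ∑ i, y i ≤ c}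
  let B : Set ({i // i ∉ K} → ℝ) := Set.univ.pi fun _ => Set.Ioo 0 1
  have hsub : {x : ι → ℝ | (∀ i, x i ∈ Set.Ioo 0 1) ∧ ∑ i ∈ K, x i ≤ c} ⊆ e ⁻¹' A ×ˢ B := by
    rintro x ⟨hx, hsum⟩
    refine ⟨⟨fun i => (hx i).1, ?_⟩, fun i _ => hx i⟩
    simpa [e, A, Finset.sum_attach] using hsum
  have hAB : MeasurableSet (A ×ˢ B) :=
    (by measurability : MeasurableSet A).prod (.univ_pi fun _ => measurableSet_Ioo)
  have hB : volume B ≤ 1 := by simp [B, volume_pi_pi, Real.volume_Ioo]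
  have hA : volume A ≤ ENNReal.ofReal (c ^ #K / (#K)!) := by
    simpa [A] using volume_corner_le K hc
  calc _ ≤ volume (e ⁻¹' A ×ˢ B) := measure_mono hsub
    _ = volume A * volume B := by
      rw [(volume_preserving_piEquivPiSubtypeProd (fun _ => ℝ) (· ∈ K)).measure_preimage
        hAB.nullMeasurableSet, Measure.volume_eq_prod, Measure.prod_prod]
      -- the two sides carry different `Fintype ↥K` instances
      congr!
    _ ≤ _ := (mul_le_mul' hA hB).trans_eq (mul_one _)

theorem measurable_emb (m : ℕ) : Measurable (emb m) :=
  (continuous_id.finSnoc (continuous_const.sub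
    (continuous_finsetSum _ fun i _ => continuous_apply i))).measurable

theorem simplexProb_apply {m : ℕ} {S : Set (Fin (m + 1) → ℝ)} (hS : MeasurableSet S)
    (hsub : S ⊆ Simplex m) : simplexProb m S = m ! * volume (emb m ⁻¹' S) := by
  rw [simplexProb, Measure.smul_apply, smul_eq_mul, Measure.map_apply (measurable_emb m) hS,
    Measure.restrict_apply (measurable_emb m hS),
    Set.inter_eq_self_of_subset_left (Set.preimage_mono hsub)]

theorem measurableSet_simplex_diff_gamma (m k : ℕ) : MeasurableSet (Simplex m \ Gamma m k) := by
  have hsimplex : MeasurableSet (Simplex m) := by unfold Simplex; measurability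
  have hshort : MeasurableSet
      {ℓ : Fin (m + 1) → ℝ | ∀ J : Finset (Fin (m + 1)), #J = k → ∑ i ∈ J, ℓ i < 1/2} := by
    measurability
  exact hsimplex.diff (hsimplex.inter hshort)

theorem exists_card_eq_half_le_sum {m k : ℕ} {ℓ : Fin (m + 1) → ℝ}
    (hℓ : ℓ ∈ Simplex m \ Gamma m k) : ∃ J : Finset (Fin (m + 1)), #J = k ∧ 1/2 ≤ ∑ i ∈ J, ℓ i := by
  by_contra! h
  exact hℓ.2 ⟨hℓ.1, h⟩

theorem simplex_diff_gamma_subset_lambda {m k : ℕ} (hk : 1 ≤ k) :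
    Simplex m \ Gamma m k ⊆ Lambda m k := by
  intro ℓ hℓ
  obtain ⟨J, hJ, hsum⟩ := exists_card_eq_half_le_sum hℓ
  have hJne : J.Nonempty := card_pos.1 (by omega)
  have hk0 : (0 : ℝ) < k := by exact_mod_cast hk
  refine ⟨hℓ.1, exists_le_of_sum_le hJne ?_ |>.imp fun i hi => hi.2⟩
  rw [sum_const, hJ, nsmul_eq_mul]
  field_simp
  linarith

theorem mem_Ioo_of_emb_mem_simplex {m : ℕ} {x : Fin m → ℝ} (hx : emb m x ∈ Simplex m)
    (i : Fin m) : x i ∈ Set.Ioo 0 1 := by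
  have hpos : ∀ j, 0 < x j := fun j => by simpa [emb] using hx.1 j.castSucc
  have hlast : 0 < 1 - ∑ j, x j := by simpa [emb] using hx.1 (Fin.last m)
  exact ⟨hpos i, by linarith [single_le_sum (fun j _ => (hpos j).le) (mem_univ i)]⟩

theorem sub_card_le_card_castSucc_notMem (m : ℕ) (J : Finset (Fin (m + 1))) :
    m - #J ≤ #{i : Fin m | i.castSucc ∉ J} := by
  have hmem : #{i : Fin m | i.castSucc ∈ J} ≤ #J :=
    card_le_card_of_injOn Fin.castSucc (fun i hi => (mem_filter.1 hi).2)
      (Fin.castSucc_injective m).injOn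
  have hsplit := card_filter_add_card_filter_not (s := (univ : Finset (Fin m)))
    (fun i : Fin m => i.castSucc ∈ J)
  simp only [card_univ, Fintype.card_fin] at hsplit
  omega

def chartSlab {m : ℕ} (J : Finset (Fin (m + 1))) : Set (Fin m → ℝ) :=
  {x | (∀ i, x i ∈ Set.Ioo 0 1) ∧ ∑ i ∈ {i : Fin m | i.castSucc ∉ J}, x i ≤ 1/2}

theorem preimage_emb_simplex_diff_gamma_subset (m k : ℕ) :
    emb m ⁻¹' (Simplex m \ Gamma m k) ⊆ ⋃ J ∈ powersetCard k univ, chartSlab J := by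
  intro x hx
  obtain ⟨J, hJ, hsum⟩ := exists_card_eq_half_le_sum hx
  refine Set.mem_biUnion (mem_powersetCard_univ.2 hJ) ⟨mem_Ioo_of_emb_mem_simplex hx.1, ?_⟩
  have hcompl : ∑ i ∈ {i : Fin m | i.castSucc ∉ J}, x i ≤ ∑ j ∈ Jᶜ, emb m x j := calc
    _ = ∑ j ∈ ({i : Fin m | i.castSucc ∉ J} : Finset (Fin m)).map Fin.castSuccEmb,
          emb m x j := by simp [emb]
    _ ≤ ∑ j ∈ Jᶜ, emb m x j := sum_le_sum_of_subset_of_nonneg (by intro j; simp; grind)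
        fun j _ _ => (hx.1.1 j).le
  have := sum_compl_add_sum J (emb m x)
  linarith [hx.1.2]

theorem antitone_pow_div_factorial {c : ℝ} (hc0 : 0 ≤ c) (hc1 : c ≤ 1) :
    Antitone fun j : ℕ => c ^ j / j ! :=
  antitone_nat_of_succ_le fun j => div_le_div₀ (by positivity)
    (pow_le_pow_of_le_one hc0 hc1 j.le_succ) (by positivity)
    (by exact_mod_cast Nat.factorial_le j.le_succ)

theorem factorial_mul_choose_mul_half_pow_le {m k : ℕ} (hk : k ≤ m) :
    (m ! : ℝ) * ((m + 1).choose k * ((1/2) ^ (m - k) / (m - k)!)) ≤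
      ((m : ℝ) + 1) ^ (2 * k) * 2 ^ (k + 1) * (1/2) ^ (m + 1) := by
  have hdesc : (m ! : ℝ) / (m - k)! = m.descFactorial k := by
    rw [← Nat.factorial_mul_descFactorial hk]
    push_cast
    field_simp
  have hhalf : (1/2 : ℝ) ^ (m - k) = 2 ^ (k + 1) * (1/2) ^ (m + 1) := by
    rw [show m + 1 = (m - k) + (k + 1) by omega, pow_add (1/2 : ℝ), mul_left_comm, ← mul_pow]
    norm_num
  have hdesc_le : (m.descFactorial k : ℝ) ≤ ((m : ℝ) + 1) ^ k := by
    exact_mod_cast (Nat.descFactorial_le_pow m k).trans (Nat.pow_le_pow_left m.le_succ k)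
  have hchoose_le : ((m + 1).choose k : ℝ) ≤ ((m : ℝ) + 1) ^ k := by
    exact_mod_cast Nat.choose_le_pow (m + 1) k
  calc (m ! : ℝ) * ((m + 1).choose k * ((1/2) ^ (m - k) / (m - k)!))
      = m.descFactorial k * (m + 1).choose k * (1/2) ^ (m - k) := by rw [← hdesc]; ring
    _ ≤ ((m : ℝ) + 1) ^ k * ((m : ℝ) + 1) ^ k * (2 ^ (k + 1) * (1/2) ^ (m + 1)) := by
        rw [hhalf]; gcongr
    _ = ((m : ℝ) + 1) ^ (2 * k) * 2 ^ (k + 1) * (1/2) ^ (m + 1) := by ring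

theorem simplexProb_simplex_diff_gamma_le {m k : ℕ} (hk : k ≤ m) :
    simplexProb m (Simplex m \ Gamma m k) ≤
      ENNReal.ofReal (((m : ℝ) + 1) ^ (2 * k) * 2 ^ (k + 1) * (1/2) ^ (m + 1)) := by
  rw [simplexProb_apply (measurableSet_simplex_diff_gamma m k) Set.sdiff_subset]
  calc (m ! : ENNReal) * volume (emb m ⁻¹' (Simplex m \ Gamma m k))
      ≤ m ! * ∑ J ∈ powersetCard k univ, volume (chartSlab J) := by
        gcongr
        exact (measure_mono (preimage_emb_simplex_diff_gamma_subset m k)).trans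
          (measure_biUnion_finset_le _ _)
    _ ≤ m ! * ∑ J ∈ powersetCard k univ, ENNReal.ofReal ((1/2) ^ (m - k) / (m - k)!) := by
        gcongr with J hJ
        refine (volume_slab_le _ (by norm_num)).trans (ENNReal.ofReal_le_ofReal ?_)
        refine antitone_pow_div_factorial (by norm_num) (by norm_num) ?_
        simpa [(mem_powersetCard_univ.1 hJ)] using sub_card_le_card_castSucc_notMem m J
    _ = ENNReal.ofReal (m ! * ((m + 1).choose k * ((1/2) ^ (m - k) / (m - k)!))) := by
        rw [sum_const, card_powersetCard, card_univ, Fintype.card_fin, nsmul_eq_mul,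
          ENNReal.ofReal_mul (by positivity), ENNReal.ofReal_mul (by positivity)]
        simp
    _ ≤ _ := ENNReal.ofReal_le_ofReal (factorial_mul_choose_mul_half_pow_le hk)

theorem exists_le_ofReal_mul_pow_of_le_poly_mul_pow {u : ℕ → ENNReal} {D r : ℝ} {j N : ℕ}
    (hD : 0 ≤ D) (hr0 : 0 ≤ r) (hr1 : r < 1) (hu_le_one : ∀ m, u m ≤ 1)
    (hu_le : ∀ m ≥ N, u m ≤ ENNReal.ofReal (D * ((m : ℝ) + 1) ^ j * r ^ (m + 1))) :
    ∃ C > (0 : ℝ), ∃ a ∈ Set.Ioo (0 : ℝ) 1, ∀ m, u m ≤ ENNReal.ofReal (C * a ^ (m + 1)) := by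
  obtain ⟨a, hra, ha1⟩ := exists_between hr1
  have ha0 : 0 < a := hr0.trans_lt hra
  obtain ⟨M, hM⟩ := (tendsto_pow_const_mul_const_pow_of_abs_lt_one j
    (abs_lt.2 ⟨by linarith [div_nonneg hr0 ha0.le], (div_lt_one ha0).2 hra⟩)).bddAbove_range
  have hM' : ∀ n : ℕ, (n : ℝ) ^ j * (r / a) ^ n ≤ M := fun n => hM ⟨n, rfl⟩
  have hM0 : 0 ≤ M := (by positivity : (0 : ℝ) ≤ (0 : ℕ) ^ j * (r / a) ^ 0).trans (hM' 0)
  refine ⟨D * M + (a ^ (N + 1))⁻¹, by positivity, a, ⟨ha0, ha1⟩, fun m => ?_⟩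
  rcases le_or_gt N m with hm | hm
  · refine (hu_le m hm).trans (ENNReal.ofReal_le_ofReal ?_)
    calc D * ((m : ℝ) + 1) ^ j * r ^ (m + 1)
        = D * (((m + 1 : ℕ) : ℝ) ^ j * (r / a) ^ (m + 1)) * a ^ (m + 1) := by
          push_cast
          rw [div_pow]
          field_simp
      _ ≤ D * M * a ^ (m + 1) := by gcongr; exact hM' (m + 1)
      _ ≤ (D * M + (a ^ (N + 1))⁻¹) * a ^ (m + 1) := by
          gcongr
          exact le_add_of_nonneg_right (by positivity)
  · refine (hu_le_one m).trans (ENNReal.one_le_ofReal.2 ?_)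
    calc (1 : ℝ) = (a ^ (N + 1))⁻¹ * a ^ (N + 1) := (inv_mul_cancel₀ (by positivity)).symm
      _ ≤ (a ^ (N + 1))⁻¹ * a ^ (m + 1) :=
          mul_le_mul_of_nonneg_left (pow_le_pow_of_le_one ha0.le ha1.le (by omega)) (by positivity)
      _ ≤ (D * M + (a ^ (N + 1))⁻¹) * a ^ (m + 1) := by
          gcongr
          exact le_add_of_nonneg_left (by positivity)

theorem withDensity_ofReal_apply_le {α : Type*} [MeasurableSpace α] {μ : Measure α}
    {f : α → ℝ} {s : Set α} {c : ℝ} (hs : MeasurableSet s) (hf : ∀ x ∈ s, f x ≤ c) :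
    μ.withDensity (fun x => ENNReal.ofReal (f x)) s ≤ ENNReal.ofReal c * μ s := by
  rw [withDensity_apply _ hs, ← setLIntegral_const]
  exact setLIntegral_mono measurable_const fun x hx => ENNReal.ofReal_le_ofReal (hf x hx)

theorem stmt15_general (f : (m : ℕ) → (Fin (m+1) → ℝ) → ℝ)
    (hprob : ∀ m, ∫⁻ ℓ, ENNReal.ofReal (f m ℓ) ∂(simplexProb m) = 1)
    (hadm : ∀ p : ℕ, 1 ≤ p → ∃ A > (0:ℝ), ∃ b ∈ Set.Ioo (0:ℝ) 2,
        ∀ m : ℕ, ∀ ℓ ∈ Lambda m p, f m ℓ ≤ A * b^(m+1))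
    (p : ℕ) :
    ∃ C > (0:ℝ), ∃ a ∈ Set.Ioo (0:ℝ) 1, ∀ m : ℕ,
      ((simplexProb m).withDensity (fun ℓ => ENNReal.ofReal (f m ℓ)))
          (Simplex m \ Gamma m (p+2))
        ≤ ENNReal.ofReal (C * a^(m+1)) := by
  obtain ⟨A, hA, b, ⟨hb0, hb2⟩, hf⟩ := hadm (p + 2) (by omega)
  refine exists_le_ofReal_mul_pow_of_le_poly_mul_pow (N := p + 2) (j := 2 * (p + 2))
    (D := A * 2 ^ (p + 3)) (r := b / 2) (by positivity) (by positivity) (by linarith)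
    (fun m => ?_) (fun m hm => ?_)
  · calc _ ≤ (simplexProb m).withDensity (fun ℓ => ENNReal.ofReal (f m ℓ)) Set.univ :=
          measure_mono (Set.subset_univ _)
      _ = 1 := by rw [withDensity_apply _ .univ, Measure.restrict_univ, hprob]
  · calc _ ≤ ENNReal.ofReal (A * b ^ (m + 1)) * simplexProb m (Simplex m \ Gamma m (p + 2)) :=
          withDensity_ofReal_apply_le (measurableSet_simplex_diff_gamma m _) fun ℓ hℓ =>
            hf m ℓ (simplex_diff_gamma_subset_lambda (by omega) hℓ)
      _ ≤ ENNReal.ofReal (A * b ^ (m + 1)) * ENNReal.ofReal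
            (((m : ℝ) + 1) ^ (2 * (p + 2)) * 2 ^ (p + 2 + 1) * (1/2) ^ (m + 1)) := by
          gcongr
          exact simplexProb_simplex_diff_gamma_le hm
      _ = _ := by
          rw [← ENNReal.ofReal_mul (by positivity)]
          congr 1
          ring

/-- for an admissible sequence of measures ν_n = f_n·μ_n and fixed
p ≥ 0, there are C > 0 and 0 < a < 1 with ν_n(Δ^{n-1} - Γ_{p+2}) ≤ C·aⁿ (n = m+1). -/
theorem stmt15 (f : (m : ℕ) → (Fin (m+1) → ℝ) → ℝ)
    (hmeas : ∀ m, Measurable (f m))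
    (hnonneg : ∀ m ℓ, 0 ≤ f m ℓ)
    (hprob : ∀ m, ∫⁻ ℓ, ENNReal.ofReal (f m ℓ) ∂(simplexProb m) = 1)
    (hadm : ∀ p : ℕ, 1 ≤ p → ∃ A > (0:ℝ), ∃ b ∈ Set.Ioo (0:ℝ) 2,
        ∀ m : ℕ, ∀ ℓ ∈ Lambda m p, f m ℓ ≤ A * b^(m+1))
    (p : ℕ) :
    ∃ C > (0:ℝ), ∃ a ∈ Set.Ioo (0:ℝ) 1, ∀ m : ℕ,
      ((simplexProb m).withDensity (fun ℓ => ENNReal.ofReal (f m ℓ)))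
          (Simplex m \ Gamma m (p+2))
        ≤ ENNReal.ofReal (C * a^(m+1)) :=
  stmt15_general f hprob hadm p
end

section
/- Call ℓ ∈ Δ^{n-1} normal if the intersection of all subsets J ⊆ {1,…,n} of cardinality 3 that are long with respect to ℓ is nonempty (where the empty intersection is {1,…,n}). Let 𝒩_n ⊆ Δ^{n-1} denote the set of normal length vectors. Then for n > 4, vol(Δ^{n-1} − 𝒩_n)/vol(Δ^{n-1}) < 24·n^6/2^n. -/
open MeasureTheory Finset Filter

/-- A length vector ℓ ∈ Δ^{n-1} is normal if the intersection of all 3-element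
subsets that are long w.r.t. ℓ is nonempty (the empty intersection being all of
{1,…,n}).  Here n = m+1 and "J long" means ∑_{i∈J} ℓ_i > 1/2. -/
def NormalVectors (m : ℕ) : Set (Fin (m+1) → ℝ) :=
  {ℓ ∈ Simplex m | ∃ i : Fin (m+1), ∀ J : Finset (Fin (m+1)),
      J.card = 3 → (1:ℝ)/2 < ∑ j ∈ J, ℓ j → i ∈ J}

/-! A non-normal length vector has a long triple `J`. In the chart `emb`, where the simplex
has volume `1/m!`, the chart coordinates outside a long `J` have sum `< 1/2` and all
coordinates lie in `(0, 1)`, so the vectors for which `J` is long have volume at most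
`2^-(m-3)/(m-3)!`. A union bound over the `C(m+1, 3)` triples then gives the estimate. -/

lemma lintegral_Ioo_sub_pow_div_factorial (d : ℕ) {c : ℝ} (hc : 0 ≤ c) :
    ∫⁻ t in Set.Ioo 0 c, ENNReal.ofReal ((c - t) ^ d / d.factorial)
      = ENNReal.ofReal (c ^ (d + 1) / (d + 1).factorial) := by
  have hint : IntegrableOn (fun t => (c - t) ^ d / d.factorial) (Set.Ioo 0 c) :=
    (Continuous.integrableOn_Icc (by fun_prop)).mono_set Set.Ioo_subset_Icc_self
  have hnonneg : ∀ᵐ t ∂volume.restrict (Set.Ioo 0 c), 0 ≤ (c - t) ^ d / d.factorial :=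
    ae_restrict_of_forall_mem measurableSet_Ioo fun t ht =>
      div_nonneg (pow_nonneg (sub_nonneg.2 ht.2.le) d) (Nat.cast_nonneg _)
  rw [← ofReal_integral_eq_lintegral_ofReal hint hnonneg, ← integral_Ioc_eq_integral_Ioo,
    ← intervalIntegral.integral_of_le hc, intervalIntegral.integral_div,
    intervalIntegral.integral_comp_sub_left (fun x => x ^ d) c, sub_self, sub_zero, integral_pow,
    zero_pow d.succ_ne_zero, sub_zero, Nat.factorial_succ]
  congr 1
  push_cast
  field_simp

def cornerSimplex (ι : Type*) [Fintype ι] (c : ℝ) : Set (ι → ℝ) :=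
  {y | (∀ i, 0 < y i) ∧ ∑ i, y i < c}

section CornerSimplex

variable {ι : Type*} [Fintype ι]

lemma measurableSet_cornerSimplex (c : ℝ) : MeasurableSet (cornerSimplex ι c) := by
  unfold cornerSimplex
  measurability

lemma cornerSimplex_eq_empty {c : ℝ} (hc : c ≤ 0) : cornerSimplex ι c = ∅ := by
  refine Set.eq_empty_of_forall_notMem fun y ⟨hpos, hsum⟩ => ?_
  have := sum_nonneg fun i (_ : i ∈ univ) => (hpos i).le
  linarith

lemma cornerSimplex_succ_eq_preimage (d : ℕ) (c : ℝ) :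
    cornerSimplex (Fin (d + 1)) c = MeasurableEquiv.piFinSuccAbove (fun _ => ℝ) 0 ⁻¹'
      {p | 0 < p.1 ∧ p.2 ∈ cornerSimplex (Fin d) (c - p.1)} := by
  ext y
  simp only [cornerSimplex, Set.mem_preimage, Set.mem_ofPred_eq, Fin.forall_fin_succ,
    Fin.sum_univ_succ, lt_sub_iff_add_lt', MeasurableEquiv.piFinSuccAbove_apply,
    Fin.insertNthEquiv_symm_apply, Fin.removeNth, Fin.succAbove_zero, and_assoc]

lemma volume_slice_cornerSimplex (d : ℕ) (c t : ℝ) :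
    volume (Prod.mk t ⁻¹'
        {p : ℝ × (Fin d → ℝ) | 0 < p.1 ∧ p.2 ∈ cornerSimplex (Fin d) (c - p.1)})
      = (Set.Ioo 0 c).indicator (fun t => volume (cornerSimplex (Fin d) (c - t))) t := by
  by_cases ht : t ∈ Set.Ioo 0 c
  · rw [Set.indicator_of_mem ht]
    congr 1
    ext y
    simp [ht.1]
  · rw [Set.indicator_of_notMem ht]
    simp only [Set.mem_Ioo, not_and_or, not_lt] at ht
    rcases ht with ht | ht
    · simp [not_lt.2 ht]
    · simp [cornerSimplex_eq_empty (sub_nonpos.2 ht)]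

lemma volume_cornerSimplex_fin (d : ℕ) {c : ℝ} (hc : 0 < c) :
    volume (cornerSimplex (Fin d) c) = ENNReal.ofReal (c ^ d / d.factorial) := by
  induction d generalizing c with
  | zero => simp [cornerSimplex, hc, volume_pi]
  | succ d ih =>
    set S := {p : ℝ × (Fin d → ℝ) | 0 < p.1 ∧ p.2 ∈ cornerSimplex (Fin d) (c - p.1)}
    have hS : MeasurableSet S := by
      have := measurableSet_cornerSimplex (ι := Fin (d + 1)) c
      rwa [cornerSimplex_succ_eq_preimage, MeasurableEquiv.measurableSet_preimage] at this
    have hslice : ∀ t, volume (Prod.mk t ⁻¹' S)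
        = (Set.Ioo 0 c).indicator (fun t => ENNReal.ofReal ((c - t) ^ d / d.factorial)) t :=
      fun t => (volume_slice_cornerSimplex d c t).trans <|
        congrFun (Set.indicator_congr fun s (hs : s ∈ Set.Ioo 0 c) => ih (sub_pos.2 hs.2)) t
    rw [cornerSimplex_succ_eq_preimage, volume_pi,
      (measurePreserving_piFinSuccAbove (fun _ => volume) 0).measure_preimage
        hS.nullMeasurableSet, ← volume_pi, Measure.prod_apply hS,
      lintegral_congr hslice, lintegral_indicator measurableSet_Ioo,
      lintegral_Ioo_sub_pow_div_factorial d hc.le]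

lemma volume_cornerSimplex {c : ℝ} (hc : 0 < c) :
    volume (cornerSimplex ι c)
      = ENNReal.ofReal (c ^ Fintype.card ι / (Fintype.card ι).factorial) := by
  set e := MeasurableEquiv.piCongrLeft (fun _ => ℝ) (Fintype.equivFin ι).symm
  have he : ∀ x i, e x i = x (Fintype.equivFin ι i) := fun x i => by
    simp [e, MeasurableEquiv.piCongrLeft, Equiv.piCongrLeft_apply_eq_cast]
  have hpre : e ⁻¹' cornerSimplex ι c = cornerSimplex (Fin (Fintype.card ι)) c := by
    ext x
    simp only [cornerSimplex, Set.mem_preimage, Set.mem_ofPred_eq, he,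
      (Fintype.equivFin ι).forall_congr_left, Equiv.apply_symm_apply,
      Equiv.sum_comp (Fintype.equivFin ι) x]
  rw [← (volume_measurePreserving_piCongrLeft (fun _ => ℝ)
    (Fintype.equivFin ι).symm).measure_preimage_equiv, hpre, volume_cornerSimplex_fin _ hc]

lemma volume_cube_sum_lt_le (s : Finset ι) {c : ℝ} (hc : 0 < c) :
    volume {x : ι → ℝ | (∀ i, x i ∈ Set.Ioo 0 1) ∧ ∑ i ∈ s, x i < c}
      ≤ ENNReal.ofReal (c ^ #s / (#s).factorial) := by
  classical
  set e := MeasurableEquiv.piEquivPiSubtypeProd (fun _ : ι => ℝ) (· ∈ s)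
  have hA := measurableSet_cornerSimplex (ι := s) c
  have hB : MeasurableSet (Set.univ.pi fun _ : {i // i ∉ s} => Set.Ioo (0 : ℝ) 1) :=
    MeasurableSet.univ_pi fun _ => measurableSet_Ioo
  calc volume {x : ι → ℝ | (∀ i, x i ∈ Set.Ioo 0 1) ∧ ∑ i ∈ s, x i < c}
      ≤ volume (e ⁻¹' (cornerSimplex s c ×ˢ Set.univ.pi fun _ => Set.Ioo 0 1)) := by
        refine measure_mono fun x ⟨hx, hsum⟩ => ⟨⟨fun i => (hx i).1, ?_⟩, fun i _ => hx i⟩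
        rwa [← Finset.sum_coe_sort s] at hsum
    _ = ENNReal.ofReal (c ^ #s / (#s).factorial) := by
        rw [(volume_preserving_piEquivPiSubtypeProd _ _).measure_preimage
          (hA.prod hB).nullMeasurableSet, Measure.volume_eq_prod, Measure.prod_prod, volume_pi_pi]
        simp only [Real.volume_Ioo, sub_zero, ENNReal.ofReal_one, prod_const_one, mul_one]
        -- the `Fintype` instance on `s` coming from `e` is not the one of `Finset` coercions
        convert volume_cornerSimplex (ι := s) hc using 3
        · congr
          exact Subsingleton.elim _ _
        all_goals simp

end CornerSimplex

lemma emb_castSucc (m : ℕ) (x : Fin m → ℝ) (i : Fin m) : emb m x i.castSucc = x i := by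
  simp [emb]

lemma emb_last (m : ℕ) (x : Fin m → ℝ) : emb m x (Fin.last m) = 1 - ∑ i, x i := by
  simp [emb]

lemma sum_emb (m : ℕ) (x : Fin m → ℝ) : ∑ j, emb m x j = 1 := by
  simp [Fin.sum_univ_castSucc, emb_castSucc, emb_last]

lemma emb_preimage_simplex (m : ℕ) : emb m ⁻¹' Simplex m = cornerSimplex (Fin m) 1 := by
  ext x
  simp only [Simplex, cornerSimplex, Set.mem_preimage, Set.mem_ofPred_eq, sum_emb, and_true,
    Fin.forall_fin_succ', emb_castSucc, emb_last, sub_pos]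

lemma sum_compl_lt_half_of_long {m : ℕ} {ℓ : Fin (m + 1) → ℝ} (hℓ : ℓ ∈ Simplex m)
    {J : Finset (Fin (m + 1))} (hJ : 1 / 2 < ∑ j ∈ J, ℓ j) : ∑ j ∈ Jᶜ, ℓ j < 1 / 2 := by
  have := sum_compl_add_sum J ℓ
  linarith [hℓ.2]

lemma emb_preimage_long_subset (m : ℕ) (J : Finset (Fin (m + 1))) :
    emb m ⁻¹' {ℓ ∈ Simplex m | 1 / 2 < ∑ j ∈ J, ℓ j}
      ⊆ {x | (∀ i, x i ∈ Set.Ioo 0 1) ∧ ∑ i ∈ univ.filter (·.castSucc ∉ J), x i < 1 / 2} := by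
  rintro x ⟨hx, hlong⟩
  have hxc : x ∈ cornerSimplex (Fin m) 1 := emb_preimage_simplex m ▸ hx
  refine ⟨fun i => ⟨hxc.1 i, ?_⟩, ?_⟩
  · exact (single_le_sum (fun j _ => (hxc.1 j).le) (mem_univ i)).trans_lt hxc.2
  · calc ∑ i ∈ univ.filter (·.castSucc ∉ J), x i
        = ∑ j ∈ (univ.filter (·.castSucc ∉ J)).map Fin.castSuccEmb, emb m x j := by
          simp [emb_castSucc]
      _ ≤ ∑ j ∈ Jᶜ, emb m x j :=
          sum_le_sum_of_subset_of_nonneg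
            (fun j hj => by obtain ⟨i, hi, rfl⟩ := mem_map.1 hj; simpa using hi)
            fun j _ _ => (hx.1 j).le
      _ < 1 / 2 := sum_compl_lt_half_of_long hx hlong

lemma sub_card_le_card_filter_castSucc_notMem (m : ℕ) (J : Finset (Fin (m + 1))) :
    m - #J ≤ #(univ.filter fun i : Fin m => i.castSucc ∉ J) := by
  have hJ : #(univ.filter fun i : Fin m => i.castSucc ∈ J) ≤ #J :=
    card_le_card_of_injOn Fin.castSucc (fun i hi => (mem_filter.1 hi).2)
      (Fin.castSucc_injective m).injOn
  have := card_filter_add_card_filter_not (s := univ) fun i : Fin m => i.castSucc ∈ J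
  simp only [card_univ, Fintype.card_fin] at this
  omega

lemma half_pow_div_factorial_antitone : Antitone fun k : ℕ => (1 / 2 : ℝ) ^ k / k.factorial :=
  fun _ _ h => div_le_div₀ (by positivity) (pow_le_pow_of_le_one (by norm_num) (by norm_num) h)
    (by positivity) (by exact_mod_cast Nat.factorial_le h)

lemma volume_emb_preimage_long_le (m : ℕ) (J : Finset (Fin (m + 1))) :
    volume (emb m ⁻¹' {ℓ ∈ Simplex m | 1 / 2 < ∑ j ∈ J, ℓ j})
      ≤ ENNReal.ofReal ((1 / 2) ^ (m - #J) / (m - #J).factorial) :=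
  (measure_mono (emb_preimage_long_subset m J)).trans <|
    (volume_cube_sum_lt_le _ (by norm_num)).trans <| ENNReal.ofReal_le_ofReal <|
      half_pow_div_factorial_antitone (sub_card_le_card_filter_castSucc_notMem m J)

lemma diff_normalVectors_subset (m : ℕ) :
    Simplex m \ NormalVectors m
      ⊆ ⋃ J ∈ powersetCard 3 univ, {ℓ ∈ Simplex m | 1 / 2 < ∑ j ∈ J, ℓ j} := by
  rintro ℓ ⟨hℓ, hnormal⟩
  obtain ⟨J, hJ, hlong, -⟩ : ∃ J : Finset (Fin (m + 1)), #J = 3 ∧ 1 / 2 < ∑ j ∈ J, ℓ j ∧ 0 ∉ J := by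
    by_contra! h
    exact hnormal ⟨hℓ, 0, h⟩
  exact Set.mem_biUnion (mem_powersetCard_univ.2 hJ) ⟨hℓ, hlong⟩

lemma volume_emb_preimage_diff_normalVectors_le (m : ℕ) :
    volume (emb m ⁻¹' (Simplex m \ NormalVectors m))
      ≤ (m + 1).choose 3 * ENNReal.ofReal ((1 / 2) ^ (m - 3) / (m - 3).factorial) :=
  calc volume (emb m ⁻¹' (Simplex m \ NormalVectors m))
      ≤ ∑ J ∈ powersetCard 3 (univ : Finset (Fin (m + 1))),
          volume (emb m ⁻¹' {ℓ ∈ Simplex m | 1 / 2 < ∑ j ∈ J, ℓ j}) :=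
        (measure_mono ((Set.preimage_mono (diff_normalVectors_subset m)).trans_eq
          Set.preimage_iUnion₂)).trans (measure_biUnion_finset_le _ _)
    _ ≤ ∑ J ∈ powersetCard 3 (univ : Finset (Fin (m + 1))),
          ENNReal.ofReal ((1 / 2) ^ (m - 3) / (m - 3).factorial) :=
        sum_le_sum fun J hJ => (mem_powersetCard_univ.1 hJ) ▸ volume_emb_preimage_long_le m J
    _ = _ := by simp

lemma choose_three_mul_half_pow_div_factorial_lt (m : ℕ) (hm : 3 ≤ m) :
    ((m + 1).choose 3 : ℝ) * ((1 / 2) ^ (m - 3) / (m - 3).factorial)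
      < 24 * ((m : ℝ) + 1) ^ 6 / 2 ^ (m + 1) * (1 / m.factorial) := by
  have hchoose : 6 * (m + 1).choose 3 ≤ (m + 1) ^ 3 := by
    have := Nat.descFactorial_le_pow (m + 1) 3
    rwa [Nat.descFactorial_eq_factorial_mul_choose] at this
  have hfact : m.factorial ≤ (m - 3).factorial * (m + 1) ^ 3 := by
    rw [← Nat.factorial_mul_descFactorial hm]
    exact Nat.mul_le_mul_left _
      ((Nat.descFactorial_le_pow m 3).trans (Nat.pow_le_pow_left m.le_succ 3))
  have hpow : 2 ^ (m + 1) = 16 * 2 ^ (m - 3) := by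
    rw [show m + 1 = (m - 3) + 4 by omega, pow_add]; ring
  have h6 : 6 * ((m + 1).choose 3 * (2 ^ (m + 1) * m.factorial))
      ≤ 16 * ((m + 1) ^ 6 * (2 ^ (m - 3) * (m - 3).factorial)) :=
    calc 6 * ((m + 1).choose 3 * (2 ^ (m + 1) * m.factorial))
        = 6 * (m + 1).choose 3 * 2 ^ (m + 1) * m.factorial := by ring
      _ ≤ (m + 1) ^ 3 * 2 ^ (m + 1) * ((m - 3).factorial * (m + 1) ^ 3) := by gcongr
      _ = 16 * ((m + 1) ^ 6 * (2 ^ (m - 3) * (m - 3).factorial)) := by rw [hpow]; ring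
  have key : (m + 1).choose 3 * (2 ^ (m + 1) * m.factorial)
      < 24 * (m + 1) ^ 6 * (2 ^ (m - 3) * (m - 3).factorial) := by
    have : 0 < (m + 1) ^ 6 * (2 ^ (m - 3) * (m - 3).factorial) := by positivity
    rw [mul_assoc 24]
    omega
  rw [one_div_pow, div_div, mul_one_div, mul_one_div, div_div,
    div_lt_div_iff₀ (by positivity) (by positivity)]
  exact_mod_cast key

/-- for n = m+1 > 4, the relative volume of the set of non-normal
length vectors is less than 24·n^6/2^n. -/
theorem stmt18 (m : ℕ) (hm : 4 < m + 1) :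
    simplexMeasure m (Simplex m \ NormalVectors m)
      < ENNReal.ofReal (24 * ((m:ℝ)+1)^6 / 2^(m+1)) := by
  have hvol : volume (emb m ⁻¹' Simplex m) = ENNReal.ofReal (1 / m.factorial) := by
    rw [emb_preimage_simplex, volume_cornerSimplex_fin m one_pos, one_pow]
  rw [simplexMeasure, hvol, ENNReal.div_lt_iff (by simp [Nat.factorial_pos]) (by simp)]
  calc volume (emb m ⁻¹' (Simplex m \ NormalVectors m))
      ≤ (m + 1).choose 3 * ENNReal.ofReal ((1 / 2) ^ (m - 3) / (m - 3).factorial) :=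
        volume_emb_preimage_diff_normalVectors_le m
    _ = ENNReal.ofReal ((m + 1).choose 3 * ((1 / 2) ^ (m - 3) / (m - 3).factorial)) := by
        rw [ENNReal.ofReal_mul (by positivity), ENNReal.ofReal_natCast]
    _ < ENNReal.ofReal (24 * ((m : ℝ) + 1) ^ 6 / 2 ^ (m + 1) * (1 / m.factorial)) :=
        (ENNReal.ofReal_lt_ofReal_iff (by positivity)).2
          (choose_three_mul_half_pow_div_factorial_lt m (by omega))
    _ = _ := ENNReal.ofReal_mul (by positivity)
end
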